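/- arXiv:1309.0199 — 6 statements merged into one kernel-verified Lean document; each statement's English description precedes it below -/
import Mathlib

section
/- Let k, t, s, m be positive integers with s < t. In F_2[x], the polynomial 1 + x^{k(t-s)} + x^{ks} + x^{kt} + x^{k(t+s)} + x^{m-k(t-s)} + x^{m-ks} + x^{m-kt} + x^{m-k(t+s)} is congruent modulo x^m - 1 to (1 + x^{kt} + x^{2kt})(1 + x^{ks} + x^{2ks}) times a unit modulo x^m - 1 in the sense that their gcds with x^m - 1 coincide; consequently, gcd of the first polynomial with x^m - 1 equals 1 if and only if gcd(m, 3tk) = gcd(m, tk) and gcd(m, 3sk) = gcd(m, sk). -/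
open Polynomial

private lemma zmod2_assoc_eq {a b : Polynomial (ZMod 2)} (h : Associated a b) : a = b := by
  obtain ⟨u, rfl⟩ := h
  have hu : IsUnit (u : Polynomial (ZMod 2)) := u.isUnit
  rw [Polynomial.isUnit_iff] at hu
  obtain ⟨c, hc, hcu⟩ := hu
  have hc1 : c = 1 := by
    have hne : c ≠ 0 := hc.ne_zero
    have : ∀ x : ZMod 2, x ≠ 0 → x = 1 := by decide
    exact this c hne
  rw [← hcu, hc1, map_one, mul_one]

private lemma dvd_X_pow_sub_one {c a : ℕ} (h : c ∣ a) :
    (X ^ c - 1 : Polynomial (ZMod 2)) ∣ X ^ a - 1 := by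
  obtain ⟨e, rfl⟩ := h
  simpa [pow_mul] using sub_dvd_pow_sub_pow (X ^ c : Polynomial (ZMod 2)) 1 e

private lemma dvd_gcd_X_pow (d : Polynomial (ZMod 2)) :
    ∀ a b : ℕ, d ∣ X ^ a - 1 → d ∣ X ^ b - 1 → d ∣ X ^ (Nat.gcd a b) - 1 := by
  intro a
  induction a using Nat.strong_induction_on with
  | _ a ih =>
    intro b ha hb
    rcases Nat.eq_zero_or_pos a with rfl | hpos
    · simpa using hb
    · rw [Nat.gcd_rec]
      refine ih (b % a) (Nat.mod_lt _ hpos) a ?_ ha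
      have key : (X ^ (b % a) - 1 : Polynomial (ZMod 2))
          = (X ^ b - 1) - X ^ (b % a) * (X ^ (a * (b / a)) - 1) := by
        rw [mul_sub, ← pow_add, mul_one]
        rw [Nat.mod_add_div b a]
        ring
      rw [key]
      exact dvd_sub hb ((ha.trans (dvd_X_pow_sub_one ⟨b / a, rfl⟩)).mul_left _)

private lemma coprime_cyclo (d mm : ℕ) (hd : 0 < d) (hmm : 0 < mm) :
    IsCoprime (1 + X ^ d + X ^ (d + d) : Polynomial (ZMod 2)) (X ^ mm - 1) ↔
      Nat.gcd mm (3 * d) = Nat.gcd mm d := by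
  have htwo : (2 : Polynomial (ZMod 2)) = 0 := by
    rw [← map_ofNat (C : ZMod 2 →+* Polynomial (ZMod 2)) 2, show (2 : ZMod 2) = 0 from by decide,
      map_zero]
  have hA3 : (1 + X ^ d + X ^ (d + d) : Polynomial (ZMod 2)) * (X ^ d - 1) = X ^ (3 * d) - 1 := by
    have h3 : 3 * d = d + d + d := by ring
    rw [h3]; ring
  have hAd : IsCoprime (1 + X ^ d + X ^ (d + d) : Polynomial (ZMod 2)) (X ^ d - 1) := by
    refine ⟨1, X ^ d, ?_⟩
    linear_combination (X ^ (d + d) : Polynomial (ZMod 2)) * htwo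
  constructor
  · intro h
    set G := Nat.gcd mm (3 * d) with hG
    have hGpos : 0 < G := Nat.gcd_pos_of_pos_left _ hmm
    have h1 : (X ^ G - 1 : Polynomial (ZMod 2)) ∣ X ^ mm - 1 :=
      dvd_X_pow_sub_one (Nat.gcd_dvd_left _ _)
    have h2 : (X ^ G - 1 : Polynomial (ZMod 2)) ∣ X ^ (3 * d) - 1 :=
      dvd_X_pow_sub_one (Nat.gcd_dvd_right _ _)
    have hcop : IsCoprime (1 + X ^ d + X ^ (d + d) : Polynomial (ZMod 2)) (X ^ G - 1) :=
      h.of_isCoprime_of_dvd_right h1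
    have h3 : (X ^ G - 1 : Polynomial (ZMod 2)) ∣ X ^ d - 1 := by
      refine hcop.symm.dvd_of_dvd_mul_left ?_
      rw [hA3]; exact h2
    -- conclude G ∣ d by degrees
    have h4 : (X ^ G - 1 : Polynomial (ZMod 2)) ∣ X ^ (Nat.gcd G d) - 1 :=
      dvd_gcd_X_pow _ G d dvd_rfl h3
    have hgd : 0 < Nat.gcd G d := Nat.gcd_pos_of_pos_left _ hGpos
    have hne : (X ^ (Nat.gcd G d) - 1 : Polynomial (ZMod 2)) ≠ 0 := by
      simpa using X_pow_sub_C_ne_zero hgd (1 : ZMod 2)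
    have hdeg := Polynomial.natDegree_le_of_dvd h4 hne
    have hdG : (X ^ G - 1 : Polynomial (ZMod 2)).natDegree = G := by
      simpa using natDegree_X_pow_sub_C (n := G) (r := (1 : ZMod 2))
    have hdg : (X ^ (Nat.gcd G d) - 1 : Polynomial (ZMod 2)).natDegree = Nat.gcd G d := by
      simpa using natDegree_X_pow_sub_C (n := Nat.gcd G d) (r := (1 : ZMod 2))
    rw [hdG, hdg] at hdeg
    have hGd : G ∣ d := by
      have hle := Nat.le_of_dvd hGpos (Nat.gcd_dvd_left G d)
      have heq : Nat.gcd G d = G := le_antisymm hle hdeg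
      exact heq ▸ Nat.gcd_dvd_right G d
    exact Nat.dvd_antisymm (Nat.dvd_gcd (Nat.gcd_dvd_left _ _) hGd)
      (Nat.dvd_gcd (Nat.gcd_dvd_left _ _) ((Nat.gcd_dvd_right _ _).trans ⟨3, by ring⟩))
  · intro hEq
    rw [← EuclideanDomain.gcd_isUnit_iff]
    set D := EuclideanDomain.gcd (1 + X ^ d + X ^ (d + d) : Polynomial (ZMod 2)) (X ^ mm - 1) with hD
    have hDA : D ∣ 1 + X ^ d + X ^ (d + d) := EuclideanDomain.gcd_dvd_left _ _
    have hDM : D ∣ X ^ mm - 1 := EuclideanDomain.gcd_dvd_right _ _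
    have hD3 : D ∣ X ^ (3 * d) - 1 := (hDA.trans ⟨X ^ d - 1, hA3.symm⟩)
    have hDg : D ∣ X ^ (Nat.gcd mm (3 * d)) - 1 := dvd_gcd_X_pow _ mm (3 * d) hDM hD3
    rw [hEq] at hDg
    have hDd : D ∣ X ^ d - 1 := hDg.trans (dvd_X_pow_sub_one (Nat.gcd_dvd_right _ _))
    exact hAd.isUnit_of_dvd' hDA hDd

theorem qbf_set_tstst (k t s m : ℕ) (hk : 0 < k) (hs : 0 < s) (hst : s < t) (hm : 0 < m)
    (hlt : k * (t + s) < m) :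
    (EuclideanDomain.gcd
        (1 + X ^ (k * (t - s)) + X ^ (k * s) + X ^ (k * t) + X ^ (k * (t + s))
          + X ^ (m - k * (t - s)) + X ^ (m - k * s) + X ^ (m - k * t) + X ^ (m - k * (t + s)))
        ((X : Polynomial (ZMod 2)) ^ m - 1)
      = EuclideanDomain.gcd
        ((1 + X ^ (k * t) + X ^ (2 * k * t)) * (1 + X ^ (k * s) + X ^ (2 * k * s)))
        ((X : Polynomial (ZMod 2)) ^ m - 1)) ∧
    (IsCoprime
        (1 + X ^ (k * (t - s)) + X ^ (k * s) + X ^ (k * t) + X ^ (k * (t + s))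
          + X ^ (m - k * (t - s)) + X ^ (m - k * s) + X ^ (m - k * t) + X ^ (m - k * (t + s)))
        ((X : Polynomial (ZMod 2)) ^ m - 1)
      ↔ Nat.gcd m (3 * t * k) = Nat.gcd m (t * k) ∧ Nat.gcd m (3 * s * k) = Nat.gcd m (s * k)) := by
  obtain ⟨u, rfl⟩ := Nat.exists_eq_add_of_lt hst
  obtain ⟨w, rfl⟩ := Nat.exists_eq_add_of_lt hlt
  rw [show s + u + 1 - s = u + 1 from by omega]
  rw [show 3 * (s + u + 1) * k = 3 * (k * (u + 1) + k * s) from by ring,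
      show (s + u + 1) * k = k * (u + 1) + k * s from by ring,
      show 3 * s * k = 3 * (k * s) from by ring,
      show s * k = k * s from by ring,
      show 2 * k * (s + u + 1) = (k * (u + 1) + k * s) + (k * (u + 1) + k * s) from by ring,
      show 2 * k * s = k * s + k * s from by ring,
      show k * (s + u + 1 + s) = k * (u + 1) + k * s + k * s from by ring,
      show k * (s + u + 1) = k * (u + 1) + k * s from by ring]
  have hA1 : 1 ≤ k * (u + 1) := Nat.one_le_iff_ne_zero.mpr (by positivity)
  have hB1 : 1 ≤ k * s := Nat.one_le_iff_ne_zero.mpr (by positivity)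
  generalize hA : k * (u + 1) = A at hA1 ⊢
  generalize hB : k * s = B at hB1 ⊢
  rw [show A + B + B + w + 1 - A = B + B + w + 1 from by omega,
      show A + B + B + w + 1 - B = A + B + w + 1 from by omega,
      show A + B + B + w + 1 - (A + B) = B + w + 1 from by omega,
      show A + B + B + w + 1 - (A + B + B) = w + 1 from by omega]
  set P : Polynomial (ZMod 2) := 1 + X ^ A + X ^ B + X ^ (A + B) + X ^ (A + B + B)
      + X ^ (B + B + w + 1) + X ^ (A + B + w + 1) + X ^ (B + w + 1) + X ^ (w + 1) with hP
  set Q : Polynomial (ZMod 2) :=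
      (1 + X ^ (A + B) + X ^ (A + B + (A + B))) * (1 + X ^ B + X ^ (B + B)) with hQ
  set M : Polynomial (ZMod 2) := X ^ (A + B + B + w + 1) - 1 with hM
  have key : X ^ (A + B + B) * P = Q + M * (X ^ (B + B) + X ^ (A + B) + X ^ B + 1) := by
    rw [hP, hQ, hM]; ring
  have hXM : IsCoprime (X : Polynomial (ZMod 2)) M := by
    refine ⟨X ^ (A + B + B + w), -1, ?_⟩
    rw [hM]; ring
  have part1 : EuclideanDomain.gcd P M = EuclideanDomain.gcd Q M := by
    apply zmod2_assoc_eq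
    apply associated_of_dvd_dvd
    · refine EuclideanDomain.dvd_gcd ?_ (EuclideanDomain.gcd_dvd_right _ _)
      have h1 := EuclideanDomain.gcd_dvd_left P M
      have h2 := EuclideanDomain.gcd_dvd_right P M
      have hQeq : Q = X ^ (A + B + B) * P - M * (X ^ (B + B) + X ^ (A + B) + X ^ B + 1) := by
        rw [key]; ring
      rw [hQeq]
      exact dvd_sub (h1.mul_left _) (h2.mul_right _)
    · refine EuclideanDomain.dvd_gcd ?_ (EuclideanDomain.gcd_dvd_right _ _)
      have h1 := EuclideanDomain.gcd_dvd_left Q M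
      have h2 := EuclideanDomain.gcd_dvd_right Q M
      have hXP : EuclideanDomain.gcd Q M ∣ X ^ (A + B + B) * P := by
        rw [key]; exact dvd_add h1 (h2.mul_right _)
      have hcop : IsCoprime (EuclideanDomain.gcd Q M) ((X : Polynomial (ZMod 2)) ^ (A + B + B)) :=
        (hXM.of_isCoprime_of_dvd_right h2).symm.pow_right
      exact hcop.dvd_of_dvd_mul_left hXP
  refine ⟨part1, ?_⟩
  rw [← EuclideanDomain.gcd_isUnit_iff, part1, EuclideanDomain.gcd_isUnit_iff,
    IsCoprime.mul_left_iff]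
  rw [hM, coprime_cyclo (A + B) (A + B + B + w + 1) (by omega) (by omega),
    coprime_cyclo B (A + B + B + w + 1) (by omega) (by omega)]
end

section
/- For positive integers k, t and in F_2[x], the identity x^{(2t+2)k} + x^{(2t+2)k} \sum_{i=1}^{t} x^{(2i+1)k} + \sum_{i=1}^{t} x^{(2i-1)k} + x^{(4t+4)k} + 1 = (1 + x^k + x^{2k})\,(\sum_{i=0}^{2t} x^{ik})\,(\sum_{i=0}^{2t+2} x^{ik}) holds. -/
open Polynomial Finset

theorem identity_prop9 (k t : ℕ) (hk : 0 < k) (ht : 0 < t) :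
    (X ^ ((2 * t + 2) * k)
        + X ^ ((2 * t + 2) * k) * (∑ i ∈ Icc 1 t, X ^ ((2 * i + 1) * k))
        + (∑ i ∈ Icc 1 t, X ^ ((2 * i - 1) * k))
        + X ^ ((4 * t + 4) * k) + 1 : Polynomial (ZMod 2))
      = (1 + X ^ k + X ^ (2 * k))
        * (∑ i ∈ range (2 * t + 1), X ^ (i * k))
        * (∑ i ∈ range (2 * t + 3), X ^ (i * k)) := by
  simp only [pow_mul']
  set y : Polynomial (ZMod 2) := X ^ k with hy
  have hX : y + 1 ≠ 0 := by
    intro h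
    have := congrArg (fun p => coeff p 0) h
    simp [hy, coeff_X_pow, (show ¬ (0 = k) by omega)] at this
  set S : Polynomial (ZMod 2) := ∑ i ∈ range t, (y ^ 2) ^ i with hS
  have hA : ∑ i ∈ Icc 1 t, y ^ (2 * i + 1) = y ^ 3 * S := by
    rw [← Finset.Ico_add_one_right_eq_Icc, Finset.sum_Ico_eq_sum_range, hS, Finset.mul_sum]
    refine Finset.sum_congr rfl fun i _ => ?_
    ring
  have hB : ∑ i ∈ Icc 1 t, y ^ (2 * i - 1) = y * S := by
    rw [← Finset.Ico_add_one_right_eq_Icc, Finset.sum_Ico_eq_sum_range, hS, Finset.mul_sum]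
    refine Finset.sum_congr rfl fun i _ => ?_
    have h : 2 * (1 + i) - 1 = 2 * i + 1 := by omega
    rw [h]; ring
  have hchar : (2 : Polynomial (ZMod 2)) = 0 := by
    have h2 : (2 : Polynomial (ZMod 2)) = C 1 + C 1 := by rw [map_one]; norm_num
    rw [h2, ← map_add, show (1 + 1 : ZMod 2) = 0 from rfl, map_zero]
  have hsub : ∀ a b : Polynomial (ZMod 2), a - b = a + b := fun a b => by
    have h2 : (2 : Polynomial (ZMod 2)) * b = 0 := by rw [hchar]; ring
    linear_combination -h2
  have h1 : (y + 1) * ∑ i ∈ range (2 * t + 1), y ^ i = y ^ (2 * t + 1) + 1 := by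
    have h := geom_sum_mul y (2 * t + 1)
    rw [hsub, hsub] at h
    linear_combination h
  have h2 : (y + 1) * ∑ i ∈ range (2 * t + 3), y ^ i = y ^ (2 * t + 3) + 1 := by
    have h := geom_sum_mul y (2 * t + 3)
    rw [hsub, hsub] at h
    linear_combination h
  have h3 : (y ^ 2 + 1) * S = (y ^ t) ^ 2 + 1 := by
    have h := geom_sum_mul (y ^ 2) t
    rw [hsub, hsub] at h
    rw [hS]
    linear_combination h
  rw [hA, hB]
  apply mul_left_cancel₀ (pow_ne_zero 2 hX)
  linear_combination (exp := 1)
    (y ^ 5 * (y ^ t) ^ 2 + y) * h3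
    - (1 + y + y ^ 2) * ((y + 1) * ∑ i ∈ range (2 * t + 3), y ^ i) * h1
    - (1 + y + y ^ 2) * (y ^ (2 * t + 1) + 1) * h2
    + (y ^ 6 * (y ^ t) ^ 2 * S + y ^ 2 * S + y ^ 5 * (y ^ t) ^ 4 + y) * hchar
end

section
/- Let m, k be positive integers and let f(x) = (1 + x^k + x^{2k})^5 in F_2[x]. Then gcd(f(x), x^m - 1) = 1 if and only if gcd(m, 3k) = gcd(m, k). -/
open Polynomial

private lemma dvd_X_pow_sub_one_s11 {R : Type*} [CommRing R] {a b : ℕ} (h : a ∣ b) :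
    (X ^ a - 1 : R[X]) ∣ X ^ b - 1 := by
  obtain ⟨c, rfl⟩ := h
  have := sub_dvd_pow_sub_pow (X ^ a : R[X]) 1 c
  simpa [← pow_mul] using this

private lemma dvd_gcd_pow {R : Type*} [CommRing R] {p : R[X]} :
    ∀ a b : ℕ, p ∣ X ^ a - 1 → p ∣ X ^ b - 1 → p ∣ X ^ (Nat.gcd a b) - 1 := by
  intro a
  induction a using Nat.strong_induction_on with
  | _ a ih =>
    intro b ha hb
    rcases Nat.eq_zero_or_pos a with rfl | hapos
    · simpa using hb
    · rw [Nat.gcd_rec]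
      apply ih (b % a) (Nat.mod_lt _ hapos) a _ ha
      -- p ∣ X ^ (b % a) - 1
      have h1 : p ∣ X ^ (a * (b / a)) - 1 := ha.trans (dvd_X_pow_sub_one_s11 (Dvd.intro _ rfl))
      have h2 : (X ^ b - 1 : R[X]) - X ^ (b % a) * (X ^ (a * (b / a)) - 1)
          = X ^ (b % a) - 1 := by
        have : X ^ (b % a) * X ^ (a * (b / a)) = (X ^ b : R[X]) := by
          rw [← pow_add, Nat.mod_add_div]
        ring_nf
        rw [← pow_add, Nat.mod_add_div]
        ring
      calc p ∣ (X ^ b - 1 : R[X]) - X ^ (b % a) * (X ^ (a * (b / a)) - 1) :=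
            dvd_sub hb (Dvd.dvd.mul_left h1 _)
        _ = X ^ (b % a) - 1 := h2

private lemma bezout_char2 (e : ℕ) :
    IsCoprime (1 + X ^ e + X ^ (2 * e) : Polynomial (ZMod 2)) (X ^ e - 1) := by
  refine ⟨1, X ^ e, ?_⟩
  have h2 : (2 : Polynomial (ZMod 2)) = 0 := by
    rw [show (2 : Polynomial (ZMod 2)) = C 2 from (map_ofNat C 2).symm,
      show (2 : ZMod 2) = 0 from rfl, map_zero]
  have : (X ^ (2 * e) : Polynomial (ZMod 2)) = (X ^ e) ^ 2 := by
    rw [mul_comm, pow_mul]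
  rw [this]
  linear_combination (X ^ e : Polynomial (ZMod 2)) ^ 2 * h2

private lemma mul_identity {R : Type*} [CommRing R] (k : ℕ) :
    (X ^ k - 1 : R[X]) * (1 + X ^ k + X ^ (2 * k)) = X ^ (3 * k) - 1 := by
  have h2 : (X ^ (2 * k) : R[X]) = (X ^ k) ^ 2 := by rw [mul_comm, pow_mul]
  have h3 : (X ^ (3 * k) : R[X]) = (X ^ k) ^ 3 := by rw [mul_comm, pow_mul]
  rw [h2, h3]; ring

theorem coprime_pow5_iff (m k : ℕ) (hm : 0 < m) (hk : 0 < k) :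
    IsCoprime (((1 + X ^ k + X ^ (2 * k)) ^ 5 : Polynomial (ZMod 2)))
        ((X : Polynomial (ZMod 2)) ^ m - 1)
      ↔ Nat.gcd m (3 * k) = Nat.gcd m k := by
  rw [IsCoprime.pow_left_iff (by norm_num)]
  set g : Polynomial (ZMod 2) := 1 + X ^ k + X ^ (2 * k) with hg
  constructor
  · -- coprime → gcd equal
    intro hcop
    by_contra hne
    set d := Nat.gcd m (3 * k) with hd
    set e := Nat.gcd m k with he
    have hepos : 0 < e := Nat.gcd_pos_of_pos_left _ hm
    have hed : e ∣ d := Nat.dvd_gcd (Nat.gcd_dvd_left _ _)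
      ((Nat.gcd_dvd_right m k).trans (dvd_mul_left k 3))
    have hd3e : d ∣ 3 * e := by
      have : d ∣ Nat.gcd (3 * m) (3 * k) :=
        Nat.dvd_gcd ((Nat.gcd_dvd_left _ _).trans (dvd_mul_left m 3)) (Nat.gcd_dvd_right _ _)
      simpa [Nat.gcd_mul_left, he] using this
    obtain ⟨c, hc⟩ := hed
    have hc3 : c ∣ 3 := by
      have := hd3e
      rw [hc, mul_comm 3 e] at this
      exact (mul_dvd_mul_iff_left hepos.ne').mp this
    have hc13 : c = 1 ∨ c = 3 := (Nat.prime_three).eq_one_or_self_of_dvd c hc3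
    have hd3 : d = 3 * e := by
      rcases hc13 with rfl | rfl
      · exact absurd (by omega : d = e) hne
      · omega
    have h3ek : ¬ (3 * e ∣ k) := by
      intro h
      have : 3 * e ∣ e := Nat.dvd_gcd (hd3 ▸ Nat.gcd_dvd_left m (3*k)) h
      have := Nat.le_of_dvd hepos this
      omega
    -- h := 1 + X^e + X^(2e) divides both g and X^m - 1
    set h : Polynomial (ZMod 2) := 1 + X ^ e + X ^ (2 * e) with hh
    have hh3e : h ∣ X ^ (3 * e) - 1 := ⟨X ^ e - 1, by rw [← mul_identity e]; ring⟩
    have hhm : h ∣ X ^ m - 1 := hh3e.trans (dvd_X_pow_sub_one_s11 (hd3 ▸ Nat.gcd_dvd_left m (3*k)))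
    -- h coprime to X^k - 1
    have hcopk : IsCoprime h ((X : Polynomial (ZMod 2)) ^ k - 1) := by
      rw [← EuclideanDomain.gcd_isUnit_iff]
      set p := EuclideanDomain.gcd h ((X : Polynomial (ZMod 2)) ^ k - 1)
      have hp1 : p ∣ X ^ (3 * e) - 1 := (EuclideanDomain.gcd_dvd_left _ _).trans hh3e
      have hp2 : p ∣ X ^ k - 1 := EuclideanDomain.gcd_dvd_right _ _
      have hgcd3ek : Nat.gcd (3 * e) k = e := by
        have h1 : e ∣ Nat.gcd (3 * e) k :=
          Nat.dvd_gcd (dvd_mul_left e 3) (Nat.gcd_dvd_right m k)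
        have h2 : Nat.gcd (3 * e) k ∣ 3 * e := Nat.gcd_dvd_left _ _
        obtain ⟨c', hc'⟩ := h1
        have hc'3 : c' ∣ 3 := by
          rw [hc', mul_comm 3 e] at h2
          exact (mul_dvd_mul_iff_left hepos.ne').mp h2
        rcases (Nat.prime_three).eq_one_or_self_of_dvd c' hc'3 with rfl | rfl
        · omega
        · refine absurd ?_ h3ek
          rw [show 3 * e = e * 3 from mul_comm 3 e, ← hc']
          exact Nat.gcd_dvd_right (3 * e) k
      have hp3 : p ∣ X ^ e - 1 := by
        have := dvd_gcd_pow (3 * e) k hp1 hp2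
        rwa [hgcd3ek] at this
      exact (bezout_char2 e).isUnit_of_dvd' (EuclideanDomain.gcd_dvd_left _ _) hp3
    have hhg : h ∣ g := by
      have hek : e ∣ k := Nat.gcd_dvd_right m k
      have h3e3k : (3 : ℕ) * e ∣ 3 * k := mul_dvd_mul_left 3 hek
      have hdvd : h ∣ (X ^ k - 1) * g := by
        rw [hg, mul_identity k]
        exact hh3e.trans (dvd_X_pow_sub_one_s11 h3e3k)
      exact hcopk.dvd_of_dvd_mul_left hdvd
    -- h is not a unit
    have hnotunit : ¬ IsUnit h := by
      intro hu
      rw [Polynomial.isUnit_iff] at hu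
      obtain ⟨r, _, hr⟩ := hu
      have hcf := congrArg (fun p => Polynomial.coeff p (2 * e)) hr
      have h1 : 2 * e ≠ 0 := by omega
      have h2 : 2 * e ≠ e := by omega
      simp [hh, Polynomial.coeff_add, Polynomial.coeff_one, Polynomial.coeff_X_pow,
        Polynomial.coeff_C, h1, h2] at hcf
    exact hnotunit (hcop.isUnit_of_dvd' hhg hhm)
  · -- gcd equal → coprime
    intro hgcd
    rw [← EuclideanDomain.gcd_isUnit_iff]
    set p := EuclideanDomain.gcd g ((X : Polynomial (ZMod 2)) ^ m - 1)
    have hp1 : p ∣ g := EuclideanDomain.gcd_dvd_left _ _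
    have hp2 : p ∣ X ^ m - 1 := EuclideanDomain.gcd_dvd_right _ _
    have hg3k : g ∣ X ^ (3 * k) - 1 := ⟨X ^ k - 1, by rw [← mul_identity k]; ring⟩
    have hp3 : p ∣ X ^ (3 * k) - 1 := hp1.trans hg3k
    have hp4 : p ∣ X ^ (Nat.gcd m (3 * k)) - 1 := dvd_gcd_pow m (3 * k) hp2 hp3
    rw [hgcd] at hp4
    have hp5 : p ∣ X ^ k - 1 := hp4.trans (dvd_X_pow_sub_one_s11 (Nat.gcd_dvd_right m k))
    exact (bezout_char2 k).isUnit_of_dvd' hp1 hp5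
end

section
/- Let m, k be positive integers. Then gcd((x^{3k} - 1)/(x^k - 1), x^m - 1) = 1 in F_2[x] if and only if gcd(m, 3k) = gcd(m, k). -/
open Polynomial Finset

private lemma aux_dvd_of_dvd {d n : ℕ} (h : d ∣ n) :
    ((X : Polynomial (ZMod 2)) ^ d - 1) ∣ (X : Polynomial (ZMod 2)) ^ n - 1 := by
  obtain ⟨c, rfl⟩ := h
  have := sub_dvd_pow_sub_pow ((X : Polynomial (ZMod 2)) ^ d) 1 c
  simpa [← pow_mul] using this

private lemma aux_dvd_gcd (p : Polynomial (ZMod 2)) :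
    ∀ m n : ℕ, p ∣ (X : Polynomial (ZMod 2)) ^ m - 1 → p ∣ (X : Polynomial (ZMod 2)) ^ n - 1 →
      p ∣ (X : Polynomial (ZMod 2)) ^ (Nat.gcd m n) - 1 := by
  intro m
  induction m using Nat.strong_induction_on with
  | _ m ih =>
    intro n h1 h2
    rcases Nat.eq_zero_or_pos m with hm0 | hm0
    · subst hm0; simpa using h2
    · rw [Nat.gcd_rec]
      refine ih (n % m) (Nat.mod_lt _ hm0) m ?_ h1
      have hq : p ∣ (X : Polynomial (ZMod 2)) ^ (m * (n / m)) - 1 :=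
        dvd_trans h1 (aux_dvd_of_dvd (Dvd.intro _ rfl))
      have hx : (X : Polynomial (ZMod 2)) ^ n = X ^ (n % m) * X ^ (m * (n / m)) := by
        rw [← pow_add, Nat.mod_add_div]
      have key : (X : Polynomial (ZMod 2)) ^ (n % m) - 1 =
          ((X : Polynomial (ZMod 2)) ^ n - 1) -
            (X : Polynomial (ZMod 2)) ^ (n % m) * ((X : Polynomial (ZMod 2)) ^ (m * (n / m)) - 1) := by
        rw [hx]; ring
      rw [key]
      exact dvd_sub h2 (Dvd.dvd.mul_left hq _)

private lemma aux_mul_identity (e : ℕ) :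
    ((X : Polynomial (ZMod 2)) ^ e - 1) * (1 + X ^ e + X ^ (e * 2)) =
      (X : Polynomial (ZMod 2)) ^ (e * 3) - 1 := by
  rw [pow_mul, pow_mul]
  ring

private lemma aux_dvd_one {g : Polynomial (ZMod 2)} {e : ℕ}
    (h1 : g ∣ 1 + X ^ e + X ^ (e * 2)) (h2 : g ∣ (X : Polynomial (ZMod 2)) ^ e - 1) :
    g ∣ 1 := by
  have h3 : g ∣ (X : Polynomial (ZMod 2)) ^ (e * 2) - 1 :=
    dvd_trans h2 (aux_dvd_of_dvd ⟨2, rfl⟩)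
  have key : (1 : Polynomial (ZMod 2)) =
      (1 + X ^ e + X ^ (e * 2)) - ((X : Polynomial (ZMod 2)) ^ e - 1)
        - ((X : Polynomial (ZMod 2)) ^ (e * 2) - 1) := by
    have h2' : (2 : Polynomial (ZMod 2)) = 0 := by
      have := CharP.cast_eq_zero (Polynomial (ZMod 2)) 2
      exact_mod_cast this
    linear_combination -h2'
  rw [key]
  exact dvd_sub (dvd_sub h1 h2) h3

private lemma aux_coprime {q : Polynomial (ZMod 2)} {e : ℕ}
    (hq : q = 1 + X ^ e + X ^ (e * 2))
    (hd : ∀ g : Polynomial (ZMod 2), g ∣ q → g ∣ (X : Polynomial (ZMod 2)) ^ e - 1 → g ∣ 1) :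
    True := trivial

private lemma aux_not_unit {e : ℕ} (he : 0 < e) :
    ¬ IsUnit (1 + X ^ e + X ^ (e * 2) : Polynomial (ZMod 2)) := by
  intro h
  rw [Polynomial.isUnit_iff] at h
  obtain ⟨r, -, hr⟩ := h
  have := congrArg (fun p => Polynomial.coeff p (e * 2)) hr
  simp only [Polynomial.coeff_C, Polynomial.coeff_add, Polynomial.coeff_one,
    Polynomial.coeff_X_pow] at this
  have h1 : e * 2 ≠ 0 := by positivity
  have h2 : e ≠ e * 2 := by omega
  simp [h1, h2, if_neg (Ne.symm h2)] at this

theorem coprime_cyclotomic_like_iff (m k : ℕ) (hm : 0 < m) (hk : 0 < k) :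
    IsCoprime ((∑ i ∈ range 3, X ^ (i * k) : Polynomial (ZMod 2)))
        ((X : Polynomial (ZMod 2)) ^ m - 1)
      ↔ Nat.gcd m (3 * k) = Nat.gcd m k := by
  classical
  set Q : Polynomial (ZMod 2) := ∑ i ∈ range 3, X ^ (i * k) with hQdef
  have hQ : Q = 1 + X ^ k + X ^ (k * 2) := by
    rw [hQdef, Finset.sum_range_succ, Finset.sum_range_succ, Finset.sum_range_one]
    norm_num [mul_comm]
  have hmul : ((X : Polynomial (ZMod 2)) ^ k - 1) * Q = (X : Polynomial (ZMod 2)) ^ (3 * k) - 1 := by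
    rw [hQ, mul_comm 3 k]; exact aux_mul_identity k
  set d := Nat.gcd m k with hd
  set D := Nat.gcd m (3 * k) with hD
  have hd0 : 0 < d := Nat.gcd_pos_of_pos_left _ hm
  have hdD : d ∣ D := Nat.dvd_gcd (Nat.gcd_dvd_left _ _) ((Nat.gcd_dvd_right m k).trans ⟨3, by ring⟩)
  have hD3d : D ∣ 3 * d := by
    have : D ∣ Nat.gcd (3 * m) (3 * k) :=
      Nat.dvd_gcd ((Nat.gcd_dvd_left _ _).trans ⟨3, by ring⟩) (Nat.gcd_dvd_right _ _)
    rwa [Nat.gcd_mul_left] at this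
  constructor
  · -- forward
    intro hco
    by_contra hne
    -- then D = 3 * d
    obtain ⟨t, ht⟩ := hdD
    have ht3 : t ∣ 3 := by
      have : d * t ∣ d * 3 := by rw [← ht]; simpa [mul_comm] using hD3d
      exact (mul_dvd_mul_iff_left hd0.ne').mp this
    have ht1 : t ≠ 1 := by rintro rfl; exact hne (by omega)
    have ht' : t = 3 := ((Nat.prime_three.eq_one_or_self_of_dvd t ht3).resolve_left ht1)
    have hDval : D = d * 3 := by rw [ht, ht']
    set Qd : Polynomial (ZMod 2) := 1 + X ^ d + X ^ (d * 2) with hQd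
    have hQdvd3d : Qd ∣ (X : Polynomial (ZMod 2)) ^ (d * 3) - 1 :=
      Dvd.intro_left _ (aux_mul_identity d)
    have hdm : d * 3 ∣ m := by
      rw [← hDval, hD]; exact Nat.gcd_dvd_left m (3 * k)
    have hQdm : Qd ∣ (X : Polynomial (ZMod 2)) ^ m - 1 :=
      hQdvd3d.trans (aux_dvd_of_dvd hdm)
    have hQd3k : Qd ∣ (X : Polynomial (ZMod 2)) ^ (3 * k) - 1 := by
      refine hQdvd3d.trans (aux_dvd_of_dvd ?_)
      exact (mul_dvd_mul_right (Nat.gcd_dvd_right m k) 3).trans ⟨1, by ring⟩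
    -- gcd (d*3) k = d
    have hgdk : Nat.gcd (d * 3) k = d := by
      refine Nat.dvd_antisymm ?_ (Nat.dvd_gcd ⟨3, rfl⟩ (Nat.gcd_dvd_right m k))
      refine Nat.dvd_gcd ?_ (Nat.gcd_dvd_right _ _)
      exact (Nat.gcd_dvd_left (d * 3) k).trans hdm
    -- Qd coprime to X^k - 1
    have hco2 : IsCoprime Qd ((X : Polynomial (ZMod 2)) ^ k - 1) := by
      rw [← EuclideanDomain.gcd_isUnit_iff]
      apply isUnit_of_dvd_one
      have g1 := EuclideanDomain.gcd_dvd_left Qd ((X : Polynomial (ZMod 2)) ^ k - 1)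
      have g2 := EuclideanDomain.gcd_dvd_right Qd ((X : Polynomial (ZMod 2)) ^ k - 1)
      have g3 : EuclideanDomain.gcd Qd ((X : Polynomial (ZMod 2)) ^ k - 1) ∣
          (X : Polynomial (ZMod 2)) ^ d - 1 := by
        have := aux_dvd_gcd _ (d * 3) k (g1.trans hQdvd3d) g2
        rwa [hgdk] at this
      exact aux_dvd_one (hQd ▸ g1) g3
    have hQdQ : Qd ∣ Q := hco2.dvd_of_dvd_mul_left (by rw [hmul]; exact hQd3k)
    exact aux_not_unit hd0 (hco.isUnit_of_dvd' hQdQ hQdm)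
  · -- reverse
    intro heq
    rw [← EuclideanDomain.gcd_isUnit_iff]
    apply isUnit_of_dvd_one
    have g1 := EuclideanDomain.gcd_dvd_left Q ((X : Polynomial (ZMod 2)) ^ m - 1)
    have g2 := EuclideanDomain.gcd_dvd_right Q ((X : Polynomial (ZMod 2)) ^ m - 1)
    have g3 : EuclideanDomain.gcd Q ((X : Polynomial (ZMod 2)) ^ m - 1) ∣
        (X : Polynomial (ZMod 2)) ^ k - 1 := by
      have h3k : Q ∣ (X : Polynomial (ZMod 2)) ^ (3 * k) - 1 := Dvd.intro_left _ hmul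
      have := aux_dvd_gcd _ (3 * k) m (g1.trans h3k) g2
      rw [Nat.gcd_comm, ← hD, heq, hd] at this
      exact this.trans (aux_dvd_of_dvd (Nat.gcd_dvd_right m k))
    exact aux_dvd_one (hQ ▸ g1) g3
end

section
/- Let m ≥ 7 and k be positive integers, and let c(x) = 1 + x^2 + x^3 + x^{m-3} + x^{m-2}. Then in F_2[x], gcd(c(x^k), x^m - 1) = 1 if and only if gcd(m, 3k) = gcd(m, k). -/
open Polynomial

namespace C23Aux

local notation "P2" => Polynomial (ZMod 2)

lemma two_eq_zero : (2 : P2) = 0 := by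
  have : ((2 : ℕ) : P2) = 0 := CharP.cast_eq_zero P2 2
  simpa using this

lemma dvd_pow_sub_one {d n : ℕ} (h : d ∣ n) : (X : P2) ^ d - 1 ∣ X ^ n - 1 := by
  obtain ⟨c, rfl⟩ := h
  simpa [← pow_mul] using sub_dvd_pow_sub_pow ((X : P2) ^ d) 1 c

lemma dvd_gcd_pow (a : P2) : ∀ m n : ℕ, a ∣ X ^ m - 1 → a ∣ X ^ n - 1 →
    a ∣ X ^ (Nat.gcd m n) - 1 := by
  intro m
  induction m using Nat.strong_induction_on with
  | _ m ih =>
    intro n hm hn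
    rcases Nat.eq_zero_or_pos m with rfl | hpos
    · simpa using hn
    · rw [Nat.gcd_rec]
      refine ih (n % m) (Nat.mod_lt n hpos) m ?_ hm
      have key : (X : P2) ^ n - 1
          = X ^ (n % m) * (X ^ (m * (n / m)) - 1) + (X ^ (n % m) - 1) := by
        rw [mul_sub, ← pow_add, Nat.mod_add_div]; ring
      have h1 : a ∣ (X : P2) ^ (n % m) * (X ^ (m * (n / m)) - 1) :=
        (hm.trans (dvd_pow_sub_one ⟨n / m, rfl⟩)).mul_left _
      have h2 := hn
      rw [key] at h2
      exact (dvd_add_right h1).mp h2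

lemma isCoprime_congr {a a' b : P2} (h : b ∣ a - a') :
    IsCoprime a b ↔ IsCoprime a' b := by
  obtain ⟨c, hc⟩ := h
  have ha : a = a' + b * c := by linear_combination hc
  subst ha
  constructor
  · intro h'
    simpa using h'.add_mul_left_left (-c)
  · intro h'
    exact h'.add_mul_left_left c

lemma isUnit_all_imp_coprime {a b : P2}
    (h : ∀ d : P2, d ∣ a → d ∣ b → IsUnit d) : IsCoprime a b := by
  classical
  rw [← EuclideanDomain.gcd_isUnit_iff]
  exact h _ (EuclideanDomain.gcd_dvd_left a b) (EuclideanDomain.gcd_dvd_right a b)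

lemma trin_cop (t : ℕ) : IsCoprime ((X : P2) ^ (2 * t) + X ^ t + 1) (X ^ t - 1) :=
  ⟨1, X ^ t, by linear_combination ((X : P2) ^ (2 * t)) * two_eq_zero⟩

lemma factor3 (t : ℕ) :
    ((X : P2) ^ t - 1) * ((X : P2) ^ (2 * t) + X ^ t + 1) = X ^ (3 * t) - 1 := by
  ring

lemma X_cop {m : ℕ} (hm : 1 ≤ m) : IsCoprime (X : P2) (X ^ m - 1) := by
  obtain ⟨j, rfl⟩ : ∃ j, m = j + 1 := ⟨m - 1, by omega⟩
  exact ⟨X ^ j, -1, by ring⟩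

lemma main_iff (m k : ℕ) (hm : 1 ≤ m) (hk : 0 < k) :
    IsCoprime ((X : P2) ^ (2 * k) + X ^ k + 1) (X ^ m - 1)
      ↔ Nat.gcd m (3 * k) = Nat.gcd m k := by
  have hPdvd : ((X : P2) ^ (2 * k) + X ^ k + 1) ∣ X ^ (3 * k) - 1 :=
    Dvd.intro_left _ (factor3 k)
  constructor
  · intro hcop
    by_contra hne
    set d := Nat.gcd m k with hd
    have hdpos : 0 < d := Nat.gcd_pos_of_pos_right m hk
    have hd_dvd : d ∣ Nat.gcd m (3 * k) :=
      Nat.dvd_gcd (Nat.gcd_dvd_left m k) ((Nat.gcd_dvd_right m k).mul_left 3)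
    have hg_dvd : Nat.gcd m (3 * k) ∣ 3 * d := by
      rw [hd, ← Nat.gcd_mul_left]
      exact Nat.dvd_gcd ((Nat.gcd_dvd_left m (3 * k)).mul_left 3)
        (Nat.gcd_dvd_right m (3 * k))
    obtain ⟨t, ht⟩ := hd_dvd
    have ht3 : t ∣ 3 := by
      have : d * t ∣ d * 3 := by rw [← ht]; simpa [mul_comm] using hg_dvd
      exact (mul_dvd_mul_iff_left hdpos.ne').mp this
    have ht' : t = 1 ∨ t = 3 := (Nat.prime_three).eq_one_or_self_of_dvd t ht3
    have hg3 : Nat.gcd m (3 * k) = 3 * d := by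
      rcases ht' with rfl | rfl
      · exfalso; apply hne; omega
      · omega
    have h3d_m : 3 * d ∣ m := hg3 ▸ Nat.gcd_dvd_left m (3 * k)
    have hdk : d ∣ k := Nat.gcd_dvd_right m k
    have hgcd3dk : Nat.gcd (3 * d) k = d := by
      refine Nat.dvd_antisymm ?_ (Nat.dvd_gcd (dvd_mul_left d 3) hdk)
      exact Nat.dvd_gcd ((Nat.gcd_dvd_left (3 * d) k).trans h3d_m)
        (Nat.gcd_dvd_right (3 * d) k)
    set Q : P2 := X ^ (2 * d) + X ^ d + 1 with hQ
    have hQ3d : Q ∣ (X : P2) ^ (3 * d) - 1 := Dvd.intro_left _ (factor3 d)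
    have hQm : Q ∣ (X : P2) ^ m - 1 := hQ3d.trans (dvd_pow_sub_one h3d_m)
    have Qcop_k : IsCoprime Q ((X : P2) ^ k - 1) := by
      apply isUnit_all_imp_coprime
      intro e he hek
      have h1 : e ∣ (X : P2) ^ (3 * d) - 1 := he.trans hQ3d
      have h2 : e ∣ (X : P2) ^ (Nat.gcd (3 * d) k) - 1 := dvd_gcd_pow e _ _ h1 hek
      rw [hgcd3dk] at h2
      exact (trin_cop d).isUnit_of_dvd' he h2
    have hQP : Q ∣ (X : P2) ^ (2 * k) + X ^ k + 1 := by
      refine Qcop_k.dvd_of_dvd_mul_right ?_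
      have h1 : Q ∣ (X : P2) ^ (3 * k) - 1 :=
        hQ3d.trans (dvd_pow_sub_one (mul_dvd_mul_left 3 hdk))
      rw [← factor3 k, mul_comm] at h1
      exact h1
    have hu : IsUnit Q := hcop.isUnit_of_dvd' hQP hQm
    have hdeg : Q.natDegree = 2 * d := by
      rw [hQ]
      have hne2 : ¬(2 * d = d) := by omega
      compute_degree!
      all_goals first
        | omega
        | (simp [WithBot.unbotD, hne2, hdpos.ne'])
    have h0 := Polynomial.natDegree_eq_zero_of_isUnit hu
    rw [hdeg] at h0
    omega
  · intro hg
    apply isUnit_all_imp_coprime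
    intro e heP hem
    have h1 : e ∣ (X : P2) ^ (3 * k) - 1 := heP.trans hPdvd
    have h2 : e ∣ (X : P2) ^ (Nat.gcd m (3 * k)) - 1 := dvd_gcd_pow e _ _ hem h1
    rw [hg] at h2
    have h3 : e ∣ (X : P2) ^ k - 1 :=
      h2.trans (dvd_pow_sub_one (Nat.gcd_dvd_right m k))
    exact (trin_cop k).isUnit_of_dvd' heP h3

end C23Aux

open C23Aux

theorem coprime_c23_iff (m k : ℕ) (hm : 7 ≤ m) (hk : 0 < k) :
    IsCoprime
        (((1 + X ^ (2 * k) + X ^ (3 * k) + X ^ ((m - 3) * k) + X ^ ((m - 2) * k) :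
            Polynomial (ZMod 2)) % ((X : Polynomial (ZMod 2)) ^ m - 1)))
        ((X : Polynomial (ZMod 2)) ^ m - 1)
      ↔ Nat.gcd m (3 * k) = Nat.gcd m k := by
  have hm1 : 1 ≤ m := by omega
  obtain ⟨n, rfl⟩ : ∃ n, m = n + 3 := ⟨m - 3, by omega⟩
  have e1 : n + 3 - 3 = n := by omega
  have e2 : n + 3 - 2 = n + 1 := by omega
  rw [e1, e2]
  set A : Polynomial (ZMod 2) :=
    1 + X ^ (2 * k) + X ^ (3 * k) + X ^ (n * k) + X ^ ((n + 1) * k) with hA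
  set B : Polynomial (ZMod 2) := X ^ (n + 3) - 1 with hB
  have stepmod : IsCoprime (A % B) B ↔ IsCoprime A B := by
    apply isCoprime_congr
    refine ⟨-(A / B), ?_⟩
    have h := EuclideanDomain.div_add_mod A B
    linear_combination h
  have stepX : IsCoprime ((X : Polynomial (ZMod 2)) ^ (3 * k)) B :=
    (X_cop hm1).pow_left
  have hBdvd : B ∣ (X : Polynomial (ZMod 2)) ^ ((n + 3) * k) - 1 :=
    dvd_pow_sub_one ⟨k, rfl⟩
  have idmain : (X : Polynomial (ZMod 2)) ^ (3 * k) * A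
      = ((X : Polynomial (ZMod 2)) ^ (2 * k) + X ^ k + 1) ^ 3
        + ((X : Polynomial (ZMod 2)) ^ ((n + 3) * k) - 1) * (1 + X ^ k) := by
    rw [hA]
    linear_combination (-((X : Polynomial (ZMod 2)) ^ (5 * k) + 3 * X ^ (4 * k)
      + 3 * X ^ (3 * k) + 3 * X ^ (2 * k) + X ^ k)) * two_eq_zero
  have step2 : IsCoprime ((X : Polynomial (ZMod 2)) ^ (3 * k) * A) B
      ↔ IsCoprime (((X : Polynomial (ZMod 2)) ^ (2 * k) + X ^ k + 1) ^ 3) B := by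
    apply isCoprime_congr
    rw [idmain]
    simpa using hBdvd.mul_right (1 + X ^ k)
  have step1 : IsCoprime A B
      ↔ IsCoprime ((X : Polynomial (ZMod 2)) ^ (3 * k) * A) B := by
    rw [IsCoprime.mul_left_iff]
    exact (and_iff_right stepX).symm
  rw [stepmod, step1, step2, IsCoprime.pow_left_iff (by norm_num : 0 < 3)]
  exact main_iff (n + 3) k hm1 hk
end

section
/- Let m, k, t be positive integers with t < (m-3)/4. Then gcd(c(x^k) mod (x^m - 1), x^m - 1) = 1, where c(x) = 1 + \sum_{i=1}^{t}(x^{2i+1} + x^{m-(2i+1)}) + x^{2t+2} + x^{m-(2t+2)}, if and only if gcd(m, (2t+3)k) = gcd(m, (2t+1)k) = gcd(m, 3k) = gcd(m, k). -/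
open Polynomial Finset

local notation "R2" => Polynomial (ZMod 2)

lemma two_eq_zero' : (2 : R2) = 0 := by
  have h : (2 : R2) = C 1 + C 1 := by norm_num
  rw [h, ← C_add]
  norm_num
  decide

lemma xpow_sub_one_dvd' {a b : ℕ} (h : a ∣ b) : ((X:R2)^a - 1) ∣ ((X:R2)^b - 1) := by
  obtain ⟨c, rfl⟩ := h
  simpa [pow_mul] using sub_dvd_pow_sub_pow ((X:R2)^a) 1 c

lemma dvd_xpow_gcd' (d : R2) (a b : ℕ) (ha : d ∣ (X:R2)^a - 1) (hb : d ∣ (X:R2)^b - 1) :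
    d ∣ (X:R2)^(Nat.gcd a b) - 1 := by
  induction a, b using Nat.gcd.induction with
  | H0 n => simpa using hb
  | H1 a b hpos ih =>
    rw [Nat.gcd_rec]
    apply ih _ ha
    have e : b % a + a * (b / a) = b := Nat.mod_add_div b a
    have key : (X:R2)^(b % a) - 1
        = ((X:R2)^b - 1) - (X:R2)^(b % a) * ((X:R2)^(a*(b/a)) - 1) := by
      rw [mul_sub, mul_one, ← pow_add, e]; ring
    rw [key]
    exact dvd_sub hb ((ha.trans (xpow_sub_one_dvd' ⟨b/a, rfl⟩)).mul_left _)

lemma dvd_of_xpow_dvd' {a b : ℕ} (ha : 0 < a) (h : ((X:R2)^a - 1) ∣ ((X:R2)^b - 1)) : a ∣ b := by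
  have e : b % a + a * (b / a) = b := Nat.mod_add_div b a
  have key : (X:R2)^(b % a) - 1
      = ((X:R2)^b - 1) - (X:R2)^(b % a) * ((X:R2)^(a*(b/a)) - 1) := by
    rw [mul_sub, mul_one, ← pow_add, e]; ring
  have h2 : ((X:R2)^a - 1) ∣ (X:R2)^(b % a) - 1 := by
    rw [key]
    exact dvd_sub h ((xpow_sub_one_dvd' ⟨b/a, rfl⟩).mul_left _)
  rcases Nat.eq_zero_or_pos (b % a) with h0 | hpos
  · exact Nat.dvd_of_mod_eq_zero h0
  · exfalso
    have hz : (X:R2)^(b % a) - 1 = 0 := by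
      apply eq_zero_of_dvd_of_degree_lt h2
      have d1 : degree ((X:R2)^(b % a) - 1) = (b % a : ℕ) := by
        simpa using degree_X_pow_sub_C hpos (1 : ZMod 2)
      have d2 : degree ((X:R2)^a - 1) = (a : ℕ) := by
        simpa using degree_X_pow_sub_C ha (1 : ZMod 2)
      rw [d1, d2]
      exact_mod_cast Nat.mod_lt b ha
    have : degree ((X:R2)^(b % a) - 1) = (b % a : ℕ) := by
      simpa using degree_X_pow_sub_C hpos (1 : ZMod 2)
    rw [hz] at this
    simp at this

lemma geom_coprime_iff' (m a kk : ℕ) (hm : 0 < m) (hk : 0 < kk) (ha : a % 2 = 1) :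
    IsCoprime (∑ i ∈ range a, (X:R2)^(i*kk)) ((X:R2)^m - 1)
      ↔ Nat.gcd m (a*kk) = Nat.gcd m kk := by
  classical
  set F : R2 := ∑ i ∈ range a, (X:R2)^(i*kk) with hFdef
  have hF : F * ((X:R2)^kk - 1) = (X:R2)^(a*kk) - 1 := by
    have h := geom_sum_mul ((X:R2)^kk) a
    rw [hFdef]
    calc (∑ i ∈ range a, (X:R2)^(i*kk)) * ((X:R2)^kk - 1)
        = (∑ i ∈ range a, ((X:R2)^kk)^i) * ((X:R2)^kk - 1) := by
          congr 1; apply sum_congr rfl; intro i _; rw [← pow_mul, Nat.mul_comm]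
      _ = ((X:R2)^kk)^a - 1 := h
      _ = (X:R2)^(a*kk) - 1 := by rw [← pow_mul, Nat.mul_comm]
  have hF1 : IsCoprime F ((X:R2)^kk - 1) := by
    have hdvd : ((X:R2)^kk - 1) ∣ F - 1 := by
      have hcast : ((a : ℕ) : R2) = 1 := by
        rw [← map_natCast (C : ZMod 2 →+* R2) a]
        have : ((a : ℕ) : ZMod 2) = 1 := by
          rw [← ZMod.natCast_mod a 2, ha]; rfl
        rw [this, map_one]
      have : F - 1 = ∑ i ∈ range a, ((X:R2)^(i*kk) - 1) := by
        rw [Finset.sum_sub_distrib, ← hFdef]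
        congr 1
        simp [hcast]
      rw [this]
      exact Finset.dvd_sum fun i _ => xpow_sub_one_dvd' (dvd_mul_left kk i)
    obtain ⟨s, hs⟩ := hdvd
    have hFeq : F = 1 + ((X:R2)^kk - 1) * s := by
      rw [← hs]; ring
    rw [hFeq]
    exact isCoprime_one_left.add_mul_left_left s
  constructor
  · intro h
    set g := Nat.gcd m (a*kk) with hg
    have hgm : ((X:R2)^g - 1) ∣ ((X:R2)^m - 1) := xpow_sub_one_dvd' (Nat.gcd_dvd_left _ _)
    have hcop : IsCoprime F ((X:R2)^g - 1) := by
      obtain ⟨u, v, huv⟩ := h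
      obtain ⟨w, hw⟩ := hgm
      exact ⟨u, v * w, by
        rw [show v * w * ((X:R2)^g - 1) = v * (((X:R2)^g - 1) * w) by ring, ← hw]
        exact huv⟩
    have hdvd : ((X:R2)^g - 1) ∣ ((X:R2)^kk - 1) * F := by
      rw [mul_comm, hF]
      exact xpow_sub_one_dvd' (Nat.gcd_dvd_right _ _)
    have hdk : ((X:R2)^g - 1) ∣ ((X:R2)^kk - 1) := hcop.symm.dvd_of_dvd_mul_right hdvd
    have hgk : g ∣ kk := dvd_of_xpow_dvd' (Nat.gcd_pos_of_pos_left _ hm) hdk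
    exact Nat.dvd_antisymm (Nat.dvd_gcd (Nat.gcd_dvd_left _ _) hgk)
      (Nat.gcd_dvd_gcd_of_dvd_right m (dvd_mul_left kk a))
  · intro h
    set d := EuclideanDomain.gcd F ((X:R2)^m - 1) with hd
    have hdF : d ∣ F := EuclideanDomain.gcd_dvd_left _ _
    have hdm : d ∣ (X:R2)^m - 1 := EuclideanDomain.gcd_dvd_right _ _
    have hda : d ∣ (X:R2)^(a*kk) - 1 := hdF.trans ⟨_, hF.symm⟩
    have hgcd : d ∣ (X:R2)^(Nat.gcd m (a*kk)) - 1 := dvd_xpow_gcd' d _ _ hdm hda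
    rw [h] at hgcd
    have hdk : d ∣ (X:R2)^kk - 1 := hgcd.trans (xpow_sub_one_dvd' (Nat.gcd_dvd_right m kk))
    exact EuclideanDomain.gcd_isUnit_iff.mp (hF1.isUnit_of_dvd' hdF hdk)

lemma star_id (t : ℕ) :
    1 + (X:R2)^(2*t+1) + (X:R2)^(2*t+2) + (X:R2)^(2*t+3) + (X:R2)^(4*t+4)
      + ∑ j ∈ range (2*t+2), (X:R2)^(2*j+1)
    = (∑ i ∈ range 3, (X:R2)^i) * (∑ i ∈ range (2*t+1), (X:R2)^i)
        * (∑ i ∈ range (2*t+3), (X:R2)^i) := by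
  have h2 : (2 : R2) = 0 := two_eq_zero'
  have hX1 : ((X:R2) - 1) ≠ 0 := by
    have : (X:R2) - C 1 ≠ 0 := X_sub_C_ne_zero 1
    simpa using this
  apply mul_left_cancel₀ (pow_ne_zero 3 hX1)
  set A := (X:R2)^(2*t+1) with hA
  set S3 := ∑ i ∈ range 3, (X:R2)^i with hS3
  set SA := ∑ i ∈ range (2*t+1), (X:R2)^i with hSA
  set SB := ∑ i ∈ range (2*t+3), (X:R2)^i with hSB
  have e1 : (X:R2)^(2*t+2) = A * X := by
    rw [hA, ← pow_succ]
  have e2 : (X:R2)^(2*t+3) = A * X^2 := by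
    rw [hA, ← pow_add]
  have e3 : (X:R2)^(4*t+4) = A * A * X^2 := by
    rw [hA, ← pow_add, ← pow_add]
    congr 1
    omega
  have hsum : ∑ j ∈ range (2*t+2), (X:R2)^(2*j+1)
      = X * ∑ j ∈ range (2*t+2), ((X:R2)^2)^j := by
    rw [Finset.mul_sum]
    apply sum_congr rfl
    intro j _
    rw [← pow_mul, pow_add, pow_one, mul_comm]
  set S2 := ∑ j ∈ range (2*t+2), ((X:R2)^2)^j with hS2
  have gA : SA * ((X:R2) - 1) = A - 1 := geom_sum_mul X (2*t+1)
  have gB : SB * ((X:R2) - 1) = A * X^2 - 1 := by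
    rw [← e2]; exact geom_sum_mul X (2*t+3)
  have g3 : S3 * ((X:R2) - 1) = X^3 - 1 := geom_sum_mul X 3
  have gs : S2 * ((X:R2)^2 - 1) = A * A * X^2 - 1 := by
    have h := geom_sum_mul ((X:R2)^2) (2*t+2)
    rw [← pow_mul, show 2*(2*t+2) = 4*t+4 by omega, e3] at h
    exact h
  rw [hsum, e1, e2, e3]
  linear_combination (((X:R2)-1)*X) * gs - (((X:R2)-1)^2*SA*SB) * g3
    - (((X:R2)^3-1)*((X:R2)-1)*SB) * gA - (((X:R2)^3-1)*(A-1)) * gB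
    + (-A + 2*X + X*A - 2*(X:R2)^2 - (X:R2)^2*A + (X:R2)^3*A + (X:R2)^3*A^2
        - (X:R2)^4*A - (X:R2)^4*A^2 + (X:R2)^5*A
        + (1-X)*((X:R2)-1)*X*S2) * h2

lemma star_elem {S : Type*} [CommRing S] [Algebra (ZMod 2) S] (z : S) (t : ℕ) :
    1 + z^(2*t+1) + z^(2*t+2) + z^(2*t+3) + z^(4*t+4) + ∑ j ∈ range (2*t+2), z^(2*j+1)
    = (∑ i ∈ range 3, z^i) * (∑ i ∈ range (2*t+1), z^i) * (∑ i ∈ range (2*t+3), z^i) := by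
  have h := congrArg (aeval z) (star_id t)
  simpa only [map_add, map_mul, map_one, map_pow, map_sum, aeval_X] using h

lemma quotient_calc {S : Type*} [CommRing S] [Algebra (ZMod 2) S] (y : S) (m k t : ℕ)
    (htm : 4*t+3 < m) (hy : y^m = 1) (h2 : (2:S) = 0) :
    y^((2*t+2)*k) * (1 + (∑ i ∈ Icc 1 t, (y^((2*i+1)*k) + y^((m-(2*i+1))*k)))
      + y^((2*t+2)*k) + y^((m-(2*t+2))*k))
    = (∑ i ∈ range 3, y^(i*k)) * (∑ i ∈ range (2*t+1), y^(i*k))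
        * (∑ i ∈ range (2*t+3), y^(i*k)) := by
  have hmk : y^(m*k) = 1 := by rw [pow_mul, hy, one_pow]
  have hmulsum : y^((2*t+2)*k) * ∑ i ∈ Icc 1 t, (y^((2*i+1)*k) + y^((m-(2*i+1))*k))
      = ∑ i ∈ Icc 1 t, (y^((2*t+3+2*i)*k) + y^((2*t+1-2*i)*k)) := by
    rw [Finset.mul_sum]
    refine sum_congr rfl fun i hi => ?_
    have hi' := (mem_Icc.mp hi).2
    have ha : y^((2*t+2)*k) * y^((2*i+1)*k) = y^((2*t+3+2*i)*k) := by
      rw [← pow_add, ← add_mul, show (2*t+2)+(2*i+1) = 2*t+3+2*i by omega]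
    have hb : y^((2*t+2)*k) * y^((m-(2*i+1))*k) = y^((2*t+1-2*i)*k) := by
      rw [← pow_add, ← add_mul, show (2*t+2)+(m-(2*i+1)) = m + (2*t+1-2*i) by omega,
          add_mul, pow_add, hmk, one_mul]
    rw [mul_add, ha, hb]
  have hT1 : y^((2*t+2)*k) * y^((m-(2*t+2))*k) = 1 := by
    rw [← pow_add, ← add_mul, show (2*t+2)+(m-(2*t+2)) = m by omega]; exact hmk
  have hT4 : y^((2*t+2)*k) * y^((2*t+2)*k) = y^((4*t+4)*k) := by
    rw [← pow_add, ← add_mul, show (2*t+2)+(2*t+2) = 4*t+4 by omega]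
  have main : y^((2*t+2)*k) * (1 + (∑ i ∈ Icc 1 t, (y^((2*i+1)*k) + y^((m-(2*i+1))*k)))
      + y^((2*t+2)*k) + y^((m-(2*t+2))*k))
      = 1 + y^((2*t+2)*k) + y^((4*t+4)*k)
        + ∑ i ∈ Icc 1 t, (y^((2*t+3+2*i)*k) + y^((2*t+1-2*i)*k)) := by
    calc y^((2*t+2)*k) * (1 + (∑ i ∈ Icc 1 t, (y^((2*i+1)*k) + y^((m-(2*i+1))*k)))
          + y^((2*t+2)*k) + y^((m-(2*t+2))*k))
        = y^((2*t+2)*k) * 1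
          + y^((2*t+2)*k) * (∑ i ∈ Icc 1 t, (y^((2*i+1)*k) + y^((m-(2*i+1))*k)))
          + y^((2*t+2)*k) * y^((2*t+2)*k)
          + y^((2*t+2)*k) * y^((m-(2*t+2))*k) := by ring
      _ = _ := by rw [hmulsum, hT1, hT4]; ring
  have conv1 : ∀ n, (∑ i ∈ range n, y^(i*k)) = ∑ i ∈ range n, (y^k)^i :=
    fun n => sum_congr rfl (fun i _ => by rw [← pow_mul, Nat.mul_comm])
  have hzp : ∀ a : ℕ, (y^k)^a = y^(a*k) := fun a => by rw [← pow_mul, Nat.mul_comm]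
  have bij1 : ∑ i ∈ Icc 1 t, y^((2*t+1-2*i)*k) = ∑ j ∈ range t, y^((2*j+1)*k) := by
    refine Finset.sum_nbij' (fun i => t - i) (fun j => t - j) ?_ ?_ ?_ ?_ ?_ <;>
      simp only [mem_Icc, mem_range] <;> intro a ha
    · omega
    · omega
    · omega
    · omega
    · have h : 2*t+1-2*a = 2*(t-a)+1 := by omega
      rw [h]
  have bij2 : ∑ i ∈ Icc 1 t, y^((2*t+3+2*i)*k)
      = ∑ j ∈ Ico (t+2) (2*t+2), y^((2*j+1)*k) := by
    refine Finset.sum_nbij' (fun i => t + 1 + i) (fun j => j - (t+1)) ?_ ?_ ?_ ?_ ?_ <;>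
      simp only [mem_Icc, mem_Ico] <;> intro a ha
    · omega
    · omega
    · omega
    · omega
    · have h : 2*t+3+2*a = 2*(t+1+a)+1 := by omega
      rw [h]
  have split : ∑ j ∈ range (2*t+2), y^((2*j+1)*k)
      = (∑ j ∈ range t, y^((2*j+1)*k)) + y^((2*t+1)*k) + y^((2*t+3)*k)
        + ∑ j ∈ Ico (t+2) (2*t+2), y^((2*j+1)*k) := by
    have h1 : ∑ j ∈ range (2*t+2), y^((2*j+1)*k)
        = (∑ j ∈ range (t+2), y^((2*j+1)*k)) + ∑ j ∈ Ico (t+2) (2*t+2), y^((2*j+1)*k) := by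
      rw [range_eq_Ico, range_eq_Ico]
      exact (Finset.sum_Ico_consecutive (f := fun j => y^((2*j+1)*k)) (Nat.zero_le _) (by omega : t+2 ≤ 2*t+2)).symm
    rw [h1, Finset.sum_range_succ, Finset.sum_range_succ,
        show 2*(t+1)+1 = 2*t+3 by omega]
  rw [main, conv1 3, conv1 (2*t+1), conv1 (2*t+3), ← star_elem (y^k) t]
  simp only [hzp]
  rw [Finset.sum_add_distrib, bij1, bij2, split]
  linear_combination (-(y^((2*t+1)*k) + y^((2*t+3)*k))) * h2

lemma key_dvd (m k t : ℕ) (htm : 4*t+3 < m) :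
    ((X:R2)^m - 1) ∣
      ((X:R2)^((2*t+2)*k) * (1 + (∑ i ∈ Icc 1 t, ((X:R2)^((2*i+1)*k) + (X:R2)^((m-(2*i+1))*k)))
        + (X:R2)^((2*t+2)*k) + (X:R2)^((m-(2*t+2))*k))
      - (∑ i ∈ range 3, (X:R2)^(i*k)) * (∑ i ∈ range (2*t+1), (X:R2)^(i*k))
          * (∑ i ∈ range (2*t+3), (X:R2)^(i*k))) := by
  rw [← Ideal.mem_span_singleton (α := R2)]
  rw [← Ideal.Quotient.mk_eq_mk_iff_sub_mem]
  set I := Ideal.span {((X:R2)^m - 1)} with hI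
  have hmem : ((X:R2)^m - 1) ∈ I := Ideal.subset_span rfl
  have hy : (Ideal.Quotient.mk I (X:R2))^m = 1 := by
    have h0 : Ideal.Quotient.mk I ((X:R2)^m - 1) = 0 := Ideal.Quotient.eq_zero_iff_mem.mpr hmem
    have h1 : Ideal.Quotient.mk I ((X:R2)^m) - 1 = 0 := by
      simpa [map_sub, map_pow, map_one] using h0
    have h2 := sub_eq_zero.mp h1
    simpa [map_pow] using h2
  have h2 : (2 : R2 ⧸ I) = 0 := by
    have h : (2 : R2 ⧸ I) = Ideal.Quotient.mk I (2:R2) := (map_ofNat _ 2).symm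
    rw [h, two_eq_zero', map_zero]
  have hq := quotient_calc (Ideal.Quotient.mk I (X:R2)) m k t htm hy h2
  simp only [map_mul, map_add, map_one, map_pow, map_sum]
  exact hq

set_option maxHeartbeats 1000000 in
theorem coprime_prop9_qbf (m k t : ℕ) (hm : 0 < m) (hk : 0 < k) (ht : 0 < t)
    (htm : 4 * t + 3 < m) :
    IsCoprime
        (((1 + (∑ i ∈ Icc 1 t, (X ^ ((2 * i + 1) * k) + X ^ ((m - (2 * i + 1)) * k)))
            + X ^ ((2 * t + 2) * k) + X ^ ((m - (2 * t + 2)) * k) : Polynomial (ZMod 2))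
          % ((X : Polynomial (ZMod 2)) ^ m - 1)))
        ((X : Polynomial (ZMod 2)) ^ m - 1)
      ↔ Nat.gcd m ((2 * t + 3) * k) = Nat.gcd m k
        ∧ Nat.gcd m ((2 * t + 1) * k) = Nat.gcd m k
        ∧ Nat.gcd m (3 * k) = Nat.gcd m k := by
  set f : R2 := (X:R2)^m - 1 with hf
  set c : R2 := 1 + (∑ i ∈ Icc 1 t, ((X:R2) ^ ((2 * i + 1) * k) + (X:R2) ^ ((m - (2 * i + 1)) * k)))
      + (X:R2) ^ ((2 * t + 2) * k) + (X:R2) ^ ((m - (2 * t + 2)) * k) with hc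
  have hmod : c % f = c + f * (-(c / f)) := by
    have h := EuclideanDomain.div_add_mod c f
    linear_combination h
  rw [hmod, IsCoprime.add_mul_left_left_iff]
  have hXf : IsCoprime ((X:R2)) f := by
    refine ⟨X^(m-1), -1, ?_⟩
    rw [hf, show (X:R2)^(m-1) * X + (-1)*((X:R2)^m - 1) = (X:R2)^(m-1) * X - (X:R2)^m + 1
      from by ring, show (X:R2)^(m-1)*X = (X:R2)^m from by rw [← pow_succ]; congr 1; omega]
    ring
  have hXkf : IsCoprime ((X:R2)^((2*t+2)*k)) f := hXf.pow_left
  have step1 : IsCoprime c f ↔ IsCoprime ((X:R2)^((2*t+2)*k) * c) f :=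
    ⟨fun h => hXkf.mul_left h, fun h => h.of_mul_left_right⟩
  rw [step1]
  obtain ⟨E, hE⟩ := key_dvd m k t htm
  have heq : (X:R2)^((2*t+2)*k) * c
      = (∑ i ∈ range 3, (X:R2)^(i*k)) * (∑ i ∈ range (2*t+1), (X:R2)^(i*k))
          * (∑ i ∈ range (2*t+3), (X:R2)^(i*k)) + f * E := by
    rw [hc, hf]
    linear_combination hE
  rw [heq, IsCoprime.add_mul_left_left_iff, IsCoprime.mul_left_iff, IsCoprime.mul_left_iff, hf]
  rw [geom_coprime_iff' m 3 k hm hk (by omega), geom_coprime_iff' m (2*t+1) k hm hk (by omega),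
      geom_coprime_iff' m (2*t+3) k hm hk (by omega)]
  tauto
end
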